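/- (Optimally tuned FTRL.) Under the hypotheses of the FTRL regret bound, suppose additionally that ‖g_t‖ ≤ G for all t = 1,…,T and that R(u) − R(θ₁) ≤ D² for the comparator u ∈ S, where G, D > 0. Then, choosing the step size η = D/(G√(2T)), the FTRL iterates satisfy Σ_{t=1}^T f_t(θ_t) − Σ_{t=1}^T f_t(u) ≤ 2 D G √(2T). -/

import Mathlib

/-!
Convexity of `f t` linearizes the regret: it is at most `∑ ⟪g t, θ t - u⟫`, which splits as
`∑ ⟪g t, θ t - θ (t + 1)⟫ + ∑ ⟪g t, θ (t + 1) - u⟫`. The second sum is at most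
`(R u - R (θ 1)) / η` by the be-the-leader induction. For the first, `θ t` and `θ (t + 1)`
minimize two `1`-strongly convex objectives that differ by the linear term `η ⟪g t, ·⟫`;
quadratic growth at both minimizers gives `‖θ t - θ (t + 1)‖ ≤ η ‖g t‖`, so each term is at most
`η ‖g t‖ ^ 2`. Hence the regret is at most `η T G ^ 2 + D ^ 2 / η`, which for the tuned `η`
equals `(3 / 2) D G √(2T)`.
-/

open Finset RealInnerProductSpace

section

variable {E : Type*} [NormedAddCommGroup E] [InnerProductSpace ℝ E]

theorem ConvexOn.sub_le_inner_gradient [CompleteSpace E] {f : E → ℝ}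
    (hf : ConvexOn ℝ Set.univ f) {x : E} (hfx : DifferentiableAt ℝ f x) (y : E) :
    f x - f y ≤ ⟪gradient f x, x - y⟫ := by
  set ℓ : ℝ →ᵃ[ℝ] E := AffineMap.lineMap x y
  have hderiv : HasDerivAt (f ∘ ℓ) ⟪gradient f x, y - x⟫ 0 := by
    have hfx' : HasFDerivAt f (InnerProductSpace.toDual ℝ E (gradient f x)) (ℓ 0) := by
      rw [AffineMap.lineMap_apply_zero]
      exact hasGradientAt_iff_hasFDerivAt.mp hfx.hasGradientAt
    exact hfx'.comp_hasDerivAt 0 AffineMap.hasDerivAt_lineMap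
  have hslope := (hf.comp_affineMap ℓ).le_slope_of_hasDerivAt (Set.mem_univ 0) (Set.mem_univ 1)
    one_pos hderiv
  simp only [slope_def_field, Function.comp, ℓ, AffineMap.lineMap_apply_one,
    AffineMap.lineMap_apply_zero, sub_zero, div_one] at hslope
  rw [← neg_sub y x, inner_neg_right]
  linarith

variable {s : Set E} {m : ℝ} {φ : E → ℝ}

theorem convexOn_inner_right (w : E) (hs : Convex ℝ s) : ConvexOn ℝ s fun v ↦ ⟪w, v⟫ :=
  ⟨hs, fun x _ y _ a b _ _ _ ↦ by simp [inner_add_right, real_inner_smul_right]⟩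

theorem StrongConvexOn.add_convexOn {ψ : E → ℝ} (hφ : StrongConvexOn s m φ)
    (hψ : ConvexOn ℝ s ψ) : StrongConvexOn s m (φ + ψ) := by
  simpa [StrongConvexOn] using hφ.add (uniformConvexOn_zero.mpr hψ)

theorem StrongConvexOn.add_inner (hφ : StrongConvexOn s m φ) (w : E) :
    StrongConvexOn s m fun v ↦ φ v + ⟪w, v⟫ :=
  hφ.add_convexOn (convexOn_inner_right w hφ.1)

theorem StrongConvexOn.add_mul_sq_le_of_isMinOn (hφ : StrongConvexOn s m φ) {x : E} (hx : x ∈ s)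
    (hmin : IsMinOn φ s x) {y : E} (hy : y ∈ s) : φ x + m / 2 * ‖y - x‖ ^ 2 ≤ φ y := by
  have hchord : ∀ a ∈ Set.Ioo (0 : ℝ) 1, (1 - a) * (m / 2 * ‖y - x‖ ^ 2) ≤ φ y - φ x := by
    rintro a ⟨ha0, ha1⟩
    have hconv := hφ.2 hy hx ha0.le (sub_nonneg.mpr ha1.le) (add_sub_cancel a 1)
    have hle :=
      isMinOn_iff.mp hmin _ (hφ.1 hy hx ha0.le (sub_nonneg.mpr ha1.le) (add_sub_cancel a 1))
    simp only [smul_eq_mul] at hconv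
    have : a * ((1 - a) * (m / 2 * ‖y - x‖ ^ 2)) ≤ a * (φ y - φ x) := by linarith
    exact le_of_mul_le_mul_left this ha0
  -- let the weight `a` of `y` in the convex combination tend to `0`
  have hlim : Filter.Tendsto (fun a : ℝ ↦ (1 - a) * (m / 2 * ‖y - x‖ ^ 2))
      (nhdsWithin 0 (Set.Ioi 0)) (nhds (m / 2 * ‖y - x‖ ^ 2)) :=
    (((continuous_const.sub continuous_id).mul continuous_const).tendsto' 0 _ (by simp)).mono_left
      nhdsWithin_le_nhds
  linarith [le_of_tendsto hlim (Filter.eventually_of_mem (Ioo_mem_nhdsGT one_pos) hchord)]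

theorem StrongConvexOn.mul_inner_sub_le_of_isMinOn (hm : 0 ≤ m) (hφ : StrongConvexOn s m φ)
    (w : E) {x y : E} (hx : x ∈ s) (hy : y ∈ s) (hxmin : IsMinOn φ s x)
    (hymin : IsMinOn (fun v ↦ φ v + ⟪w, v⟫) s y) : m * ⟪w, x - y⟫ ≤ ‖w‖ ^ 2 := by
  set d := ‖x - y‖
  have hgrow₁ := hφ.add_mul_sq_le_of_isMinOn hx hxmin hy
  have hgrow₂ := (hφ.add_inner w).add_mul_sq_le_of_isMinOn hy hymin hx
  rw [norm_sub_rev] at hgrow₁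
  have hcs : ⟪w, x - y⟫ ≤ ‖w‖ * d := real_inner_le_norm w (x - y)
  have hsq : m * d ^ 2 ≤ ⟪w, x - y⟫ := by rw [inner_sub_right]; linarith
  have hmd : m * d ≤ ‖w‖ := by
    rcases (show 0 ≤ d from norm_nonneg _).eq_or_lt with hd | hd
    · rw [← hd, mul_zero]; exact norm_nonneg w
    · exact le_of_mul_le_mul_right (by nlinarith) hd
  nlinarith [mul_le_mul_of_nonneg_left hcs hm, mul_le_mul_of_nonneg_left hmd (norm_nonneg w)]

/-- The iterate `θ (t + 1)` minimizes `ftrlObjective η g R t` over `S`; for `t = 0` the sum is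
empty, so `θ 1` minimizes `R`. -/
def ftrlObjective (η : ℝ) (g : ℕ → E) (R : E → ℝ) (t : ℕ) (v : E) : ℝ :=
  η * ∑ s ∈ Icc 1 t, ⟪g s, v⟫ + R v

variable {η : ℝ} {g : ℕ → E} {R : E → ℝ} {S : Set E} {θ : ℕ → E} {T : ℕ}

@[simp]
theorem ftrlObjective_zero : ftrlObjective η g R 0 = R := by
  ext v
  simp [ftrlObjective]

theorem ftrlObjective_succ (t : ℕ) :
    ftrlObjective η g R (t + 1) = fun v ↦ ftrlObjective η g R t v + ⟪η • g (t + 1), v⟫ := by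
  ext v
  simp only [ftrlObjective, sum_Icc_succ_top (Nat.le_add_left 1 t), real_inner_smul_left]
  ring

theorem StrongConvexOn.ftrlObjective {m : ℝ} (hR : StrongConvexOn S m R) (t : ℕ) :
    StrongConvexOn S m (ftrlObjective η g R t) := by
  induction t with
  | zero => simpa using hR
  | succ t ih => rw [ftrlObjective_succ]; exact ih.add_inner _

theorem ftrl_be_the_leader (hmem : ∀ t ≤ T, θ (t + 1) ∈ S)
    (hmin : ∀ t ≤ T, IsMinOn (ftrlObjective η g R t) S (θ (t + 1))) {v : E} (hv : v ∈ S) :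
    R (θ 1) + η * ∑ t ∈ Icc 1 T, ⟪g t, θ (t + 1)⟫ ≤ ftrlObjective η g R T v := by
  induction T generalizing v with
  | zero => simpa using isMinOn_iff.mp (hmin 0 le_rfl) v hv
  | succ T ih =>
    have hprev := ih (fun t ht ↦ hmem t (by omega)) (fun t ht ↦ hmin t (by omega))
      (hmem (T + 1) le_rfl)
    have hcur := isMinOn_iff.mp (hmin (T + 1) le_rfl) v hv
    simp only [ftrlObjective_succ, real_inner_smul_left] at hcur ⊢
    rw [sum_Icc_succ_top (Nat.le_add_left 1 T), mul_add]
    linarith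

theorem ftrl_inner_sub_le_norm_sq (hη : 0 < η) {m : ℝ} (hm : 0 < m) (hR : StrongConvexOn S m R)
    (hmem : ∀ t ≤ T, θ (t + 1) ∈ S)
    (hmin : ∀ t ≤ T, IsMinOn (ftrlObjective η g R t) S (θ (t + 1))) {t : ℕ} (ht : t ∈ Icc 1 T) :
    ⟪g t, θ t - θ (t + 1)⟫ ≤ η / m * ‖g t‖ ^ 2 := by
  obtain ⟨k, rfl⟩ : ∃ k, t = k + 1 := Nat.exists_eq_add_of_le' (mem_Icc.mp ht).1
  have hk : k + 1 ≤ T := (mem_Icc.mp ht).2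
  have hstab := (hR.ftrlObjective k).mul_inner_sub_le_of_isMinOn hm.le (η • g (k + 1))
    (hmem k (by omega)) (hmem (k + 1) hk) (hmin k (by omega))
    (ftrlObjective_succ (η := η) (g := g) (R := R) k ▸ hmin (k + 1) hk)
  rw [real_inner_smul_left, norm_smul, Real.norm_of_nonneg hη.le] at hstab
  rw [div_mul_eq_mul_div, le_div_iff₀ hm]
  nlinarith

theorem ftrl_linear_regret_le (hη : 0 < η) {m : ℝ} (hm : 0 < m) (hR : StrongConvexOn S m R)
    (hmem : ∀ t ≤ T, θ (t + 1) ∈ S)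
    (hmin : ∀ t ≤ T, IsMinOn (ftrlObjective η g R t) S (θ (t + 1))) {u : E} (hu : u ∈ S) :
    ∑ t ∈ Icc 1 T, ⟪g t, θ t - u⟫ ≤ η / m * ∑ t ∈ Icc 1 T, ‖g t‖ ^ 2 + (R u - R (θ 1)) / η := by
  have hleader : η * ∑ t ∈ Icc 1 T, ⟪g t, θ (t + 1) - u⟫ ≤ R u - R (θ 1) := by
    have := ftrl_be_the_leader hmem hmin hu
    simp only [ftrlObjective, inner_sub_right, sum_sub_distrib] at this ⊢
    linarith
  calc ∑ t ∈ Icc 1 T, ⟪g t, θ t - u⟫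
      = ∑ t ∈ Icc 1 T, ⟪g t, θ t - θ (t + 1)⟫ + ∑ t ∈ Icc 1 T, ⟪g t, θ (t + 1) - u⟫ := by
        rw [← sum_add_distrib]
        exact sum_congr rfl fun t _ ↦ by rw [← inner_add_right, sub_add_sub_cancel]
    _ ≤ η / m * ∑ t ∈ Icc 1 T, ‖g t‖ ^ 2 + (R u - R (θ 1)) / η := by
        rw [mul_sum]
        gcongr with t ht
        · exact ftrl_inner_sub_le_norm_sq hη hm hR hmem hmin ht
        · rw [le_div_iff₀ hη, mul_comm]; exact hleader

end

theorem ftrl_regret_bound_tuned_general (n T : ℕ)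
    (S : Set (EuclideanSpace ℝ (Fin n)))
    (G D : ℝ) (hG : 0 < G) (hD : 0 < D)
    (η : ℝ) (hη : η = D / (G * Real.sqrt (2 * T)))
    (R : EuclideanSpace ℝ (Fin n) → ℝ)
    (hR_sc : StrongConvexOn S 1 R)
    (f : ℕ → EuclideanSpace ℝ (Fin n) → ℝ)
    (hf_cvx : ∀ t, ConvexOn ℝ Set.univ (f t))
    (hf_diff : ∀ t, Differentiable ℝ (f t))
    (θ : ℕ → EuclideanSpace ℝ (Fin n))
    (g : ℕ → EuclideanSpace ℝ (Fin n))
    (hg : ∀ t, g t = gradient (f t) (θ t))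
    (hθ1 : θ 1 ∈ S ∧ ∀ u ∈ S, R (θ 1) ≤ R u)
    (hstep : ∀ t, 1 ≤ t → t ≤ T →
      θ (t + 1) ∈ S ∧ ∀ u ∈ S,
        η * (∑ s ∈ Finset.Icc 1 t, ⟪g s, θ (t + 1)⟫) + R (θ (t + 1)) ≤
          η * (∑ s ∈ Finset.Icc 1 t, ⟪g s, u⟫) + R u)
    (hGbd : ∀ t, 1 ≤ t → t ≤ T → ‖g t‖ ≤ G)
    (u : EuclideanSpace ℝ (Fin n)) (hu : u ∈ S)
    (hDbd : R u - R (θ 1) ≤ D ^ 2) :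
    (∑ t ∈ Finset.Icc 1 T, f t (θ t)) - (∑ t ∈ Finset.Icc 1 T, f t u) ≤
      2 * D * G * Real.sqrt (2 * T) := by
  rcases Nat.eq_zero_or_pos T with rfl | hT
  · simp
  have hsqrt : 0 < Real.sqrt (2 * T) := by positivity
  have hη_pos : 0 < η := hη ▸ by positivity
  have hmem : ∀ t ≤ T, θ (t + 1) ∈ S := fun t ht ↦
    t.eq_zero_or_pos.elim (fun h ↦ h ▸ hθ1.1) fun h ↦ (hstep t h ht).1
  have hmin : ∀ t ≤ T, IsMinOn (ftrlObjective η g R t) S (θ (t + 1)) := fun t ht ↦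
    isMinOn_iff.mpr <| t.eq_zero_or_pos.elim (fun h ↦ h ▸ by simpa using hθ1.2)
      fun h ↦ (hstep t h ht).2
  have hgrad_sq : ∑ t ∈ Icc 1 T, ‖g t‖ ^ 2 ≤ T * G ^ 2 := by
    simpa using sum_le_card_nsmul (Icc 1 T) (fun t ↦ ‖g t‖ ^ 2) (G ^ 2) fun t ht ↦
      pow_le_pow_left₀ (norm_nonneg _) (hGbd t (mem_Icc.mp ht).1 (mem_Icc.mp ht).2) 2
  calc (∑ t ∈ Icc 1 T, f t (θ t)) - ∑ t ∈ Icc 1 T, f t u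
      = ∑ t ∈ Icc 1 T, (f t (θ t) - f t u) := (sum_sub_distrib _ _).symm
    _ ≤ ∑ t ∈ Icc 1 T, ⟪g t, θ t - u⟫ := sum_le_sum fun t _ ↦
        hg t ▸ (hf_cvx t).sub_le_inner_gradient (hf_diff t _) u
    _ ≤ η * ∑ t ∈ Icc 1 T, ‖g t‖ ^ 2 + (R u - R (θ 1)) / η := by
        simpa only [div_one] using ftrl_linear_regret_le hη_pos one_pos hR_sc hmem hmin hu
    _ ≤ η * (T * G ^ 2) + D ^ 2 / η := by gcongr
    _ = 3 / 2 * (D * G * Real.sqrt (2 * T)) := by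
        have hsq : Real.sqrt (2 * T) ^ 2 = 2 * T := Real.sq_sqrt (by positivity)
        rw [hη]
        field_simp
        rw [hsq]
        ring
    _ ≤ 2 * D * G * Real.sqrt (2 * T) := by linarith [mul_pos (mul_pos hD hG) hsqrt]

/-- **Optimally tuned FTRL.**  Under the hypotheses of the FTRL regret bound,
if moreover `‖g t‖ ≤ G` for all `t = 1, …, T` and `R u − R (θ 1) ≤ D²` for the
comparator `u ∈ S`, with `G, D > 0`, then choosing the step size
`η = D / (G √(2T))` the FTRL iterates satisfy
`Σ_{t=1}^T f t (θ t) − Σ_{t=1}^T f t u ≤ 2 D G √(2T)`. -/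
theorem ftrl_regret_bound_tuned (n T : ℕ)
    (S : Set (EuclideanSpace ℝ (Fin n))) (hS_ne : S.Nonempty)
    (hS_cpt : IsCompact S) (hS_cvx : Convex ℝ S)
    (G D : ℝ) (hG : 0 < G) (hD : 0 < D)
    (η : ℝ) (hη : η = D / (G * Real.sqrt (2 * T)))
    (R : EuclideanSpace ℝ (Fin n) → ℝ) (hR_cont : Continuous R)
    (hR_sc : StrongConvexOn S 1 R)
    (f : ℕ → EuclideanSpace ℝ (Fin n) → ℝ)
    (hf_cvx : ∀ t, ConvexOn ℝ Set.univ (f t))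
    (hf_diff : ∀ t, Differentiable ℝ (f t))
    (θ : ℕ → EuclideanSpace ℝ (Fin n))
    (g : ℕ → EuclideanSpace ℝ (Fin n))
    (hg : ∀ t, g t = gradient (f t) (θ t))
    (hθ1 : θ 1 ∈ S ∧ ∀ u ∈ S, R (θ 1) ≤ R u)
    (hstep : ∀ t, 1 ≤ t → t ≤ T →
      θ (t + 1) ∈ S ∧ ∀ u ∈ S,
        η * (∑ s ∈ Finset.Icc 1 t, ⟪g s, θ (t + 1)⟫) + R (θ (t + 1)) ≤
          η * (∑ s ∈ Finset.Icc 1 t, ⟪g s, u⟫) + R u)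
    (hGbd : ∀ t, 1 ≤ t → t ≤ T → ‖g t‖ ≤ G)
    (u : EuclideanSpace ℝ (Fin n)) (hu : u ∈ S)
    (hDbd : R u - R (θ 1) ≤ D ^ 2) :
    (∑ t ∈ Finset.Icc 1 T, f t (θ t)) - (∑ t ∈ Finset.Icc 1 T, f t u) ≤
      2 * D * G * Real.sqrt (2 * T) :=
  ftrl_regret_bound_tuned_general n T S G D hG hD η hη R hR_sc f hf_cvx hf_diff θ g hg hθ1 hstep
    hGbd u hu hDbd
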